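/- Let k be even and positive, X an n×m matrix over ℤ/kℤ. Then for every 3-subset R of rows and every k-subset C of columns, there exist rows i ≠ j in R and columns p ≠ q in C forming a fair 2×2 submatrix of X. -/

import Mathlib

/-!
If two rows `i ≠ j` have no fair submatrix on a set `C` of `k` columns, the row difference
`p ↦ X i p - X j p` is injective on `C`, hence a bijection onto `ZMod k`, and so sums to
`S = ∑ x : ZMod k, x`. For three rows `a, b, c` the identity `d_ab + d_bc = d_ac` then forces
`S + S = S`, i.e. `S = 0`; but for even `k` the sum `S` is `k / 2 ≠ 0`.
-/

open Finset

theorem ZMod.sum_univ_eq_sum_range (k : ℕ) [NeZero k] :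
    ∑ x : ZMod k, x = ∑ i ∈ range k, (i : ZMod k) :=
  Finset.sum_nbij' ZMod.val (↑) (fun a _ => mem_range.2 (ZMod.val_lt a)) (fun _ _ => mem_univ _)
    (fun a _ => ZMod.natCast_zmod_val a) (fun _ ha => ZMod.val_cast_of_lt (mem_range.1 ha))
    (fun a _ => (ZMod.natCast_zmod_val a).symm)

theorem ZMod.sum_univ_add_self (t : ℕ) [NeZero t] : ∑ x : ZMod (t + t), x = t := by
  have hsum : (∑ i ∈ range (t + t), i) = t * (t + t - 1) := by
    have := Finset.sum_range_id_mul_two (t + t)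
    rw [show (t + t) * (t + t - 1) = t * (t + t - 1) * 2 by ring] at this
    omega
  have htt : ((t + t : ℕ) : ZMod (t + t)) = 0 := ZMod.natCast_self _
  have h1 : 1 ≤ t + t := by have := NeZero.pos t; omega
  rw [ZMod.sum_univ_eq_sum_range, ← Nat.cast_sum, hsum, Nat.cast_mul, Nat.cast_sub h1, htt]
  push_cast at htt
  linear_combination -htt

theorem ZMod.sum_univ_ne_zero_of_even {k : ℕ} [NeZero k] (hk : Even k) : ∑ x : ZMod k, x ≠ 0 := by
  obtain ⟨t, rfl⟩ := hk
  have : NeZero t := ⟨by rintro rfl; exact NeZero.ne 0 rfl⟩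
  rw [ZMod.sum_univ_add_self, Ne, ZMod.natCast_eq_zero_iff]
  exact fun h => NeZero.ne t (Nat.eq_zero_of_dvd_of_lt h (by have := NeZero.pos t; omega))

theorem Finset.sum_eq_sum_univ_of_injOn {ι G : Type*} [AddCommMonoid G] [Fintype G]
    {C : Finset ι} {f : ι → G} (hf : Set.InjOn f C) (hC : #C = Fintype.card G) :
    ∑ p ∈ C, f p = ∑ x, x := by
  classical
  rw [← sum_image (f := fun x => x) hf,
    eq_univ_of_card (C.image f) (by rw [card_image_of_injOn hf, hC])]

theorem injOn_sub_of_forall_add_ne {ι κ G : Type*} [AddCommGroup G] (X : ι → κ → G) {i j : ι}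
    {C : Finset κ} (h : ∀ p ∈ C, ∀ q ∈ C, p ≠ q → X i p + X j q ≠ X i q + X j p) :
    Set.InjOn (fun p => X i p - X j p) C := by
  intro p hp q hq hpq
  by_contra hne
  exact h p hp q hq hne (sub_eq_sub_iff_add_eq_add.mp hpq)

theorem exists_fair_of_sum_univ_ne_zero {ι κ G : Type*} [AddCommGroup G] [Fintype G]
    (hG : ∑ x : G, x ≠ 0) (X : ι → κ → G) {R : Finset ι} (hR : #R = 3) {C : Finset κ}
    (hC : #C = Fintype.card G) :
    ∃ i ∈ R, ∃ j ∈ R, i ≠ j ∧ ∃ p ∈ C, ∃ q ∈ C, p ≠ q ∧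
      X i p + X j q = X i q + X j p := by
  by_contra! hcon
  have hrow : ∀ i ∈ R, ∀ j ∈ R, i ≠ j → ∑ p ∈ C, (X i p - X j p) = ∑ x : G, x :=
    fun i hi j hj hij =>
      sum_eq_sum_univ_of_injOn (injOn_sub_of_forall_add_ne X (hcon i hi j hj hij)) hC
  classical
  obtain ⟨a, b, c, hab, hac, hbc, hRabc⟩ := card_eq_three.mp hR
  have ha : a ∈ R := by simp [hRabc]
  have hb : b ∈ R := by simp [hRabc]
  have hc : c ∈ R := by simp [hRabc]
  have htri : ∑ p ∈ C, (X a p - X b p) + ∑ p ∈ C, (X b p - X c p) =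
      ∑ p ∈ C, (X a p - X c p) := by
    rw [← sum_add_distrib]
    exact sum_congr rfl fun _ _ => sub_add_sub_cancel _ _ _
  rw [hrow a ha b hb hab, hrow b hb c hc hbc, hrow a ha c hc hac, add_eq_right] at htri
  exact hG htri

theorem fair_family_covers_three (k n m : ℕ) (hk : 0 < k) (hke : Even k)
    (X : Fin n → Fin m → ZMod k)
    (R : Finset (Fin n)) (hR : R.card = 3)
    (C : Finset (Fin m)) (hC : C.card = k) :
    ∃ i ∈ R, ∃ j ∈ R, i ≠ j ∧ ∃ p ∈ C, ∃ q ∈ C, p ≠ q ∧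
      X i p + X j q = X i q + X j p := by
  have : NeZero k := ⟨hk.ne'⟩
  exact exists_fair_of_sum_univ_ne_zero (ZMod.sum_univ_ne_zero_of_even hke) X hR
    (by rw [hC, ZMod.card])
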